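/- (Multiclass error floor.) Consider L ≥ 3 zero-mean classes and the union–Bhattacharyya upper bound P̄_err(σ²) = Σ_{i=1}^{L} Σ_{j ≠ i} P_i · sqrt(P_i·P_j) · exp(−K_{ij}(σ²)). If there exists at least one pair i ≠ j with r_i + r_j = 2·r_{ij}, then P̄_err(σ²) converges, as σ² → 0 from the right, to a finite strictly positive limit; in particular the multiclass bound exhibits an error floor. -/

import Mathlib

open Matrix MeasureTheory Filter Real Topology

/-- Pseudo-determinant of a real square matrix: the product of the nonzero
eigenvalues when the matrix is Hermitian (symmetric), with the empty product
equal to 1; junk value 0 otherwise. -/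
noncomputable def pdet {n : ℕ} (A : Matrix (Fin n) (Fin n) ℝ) : ℝ :=
  if h : A.IsHermitian then
    ∏ i ∈ Finset.univ.filter (fun i => h.eigenvalues i ≠ 0), h.eigenvalues i
  else 0

/-- Bhattacharyya exponent `K(σ²)` for the two-class compressive
classification problem, as a function of the noise level `s = σ²`. -/
noncomputable def Kb {M N : ℕ} (Φ : Matrix (Fin M) (Fin N) ℝ)
    (S1 S2 : Matrix (Fin N) (Fin N) ℝ) (μ1 μ2 : Fin N → ℝ) (s : ℝ) : ℝ :=
  1/8 * ((Φ *ᵥ (μ1 - μ2)) ⬝ᵥ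
      (((1/2 : ℝ) • (Φ * (S1 + S2) * Φᵀ + s • (1 : Matrix (Fin M) (Fin M) ℝ)))⁻¹
        *ᵥ (Φ *ᵥ (μ1 - μ2))))
  + 1/2 * Real.log
      (((1/2 : ℝ) • (Φ * (S1 + S2) * Φᵀ + s • (1 : Matrix (Fin M) (Fin M) ℝ))).det /
        Real.sqrt ((Φ * S1 * Φᵀ + s • (1 : Matrix (Fin M) (Fin M) ℝ)).det *
          (Φ * S2 * Φᵀ + s • (1 : Matrix (Fin M) (Fin M) ℝ)).det))

/-- Bhattacharyya upper bound `P̄_err(σ²)` to the misclassification probability. -/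
noncomputable def Perr {M N : ℕ} (Φ : Matrix (Fin M) (Fin N) ℝ)
    (S1 S2 : Matrix (Fin N) (Fin N) ℝ) (μ1 μ2 : Fin N → ℝ) (P1 P2 : ℝ) (s : ℝ) : ℝ :=
  Real.sqrt (P1 * P2) * Real.exp (-(Kb Φ S1 S2 μ1 μ2 s))

/-- Union–Bhattacharyya upper bound to the misclassification probability for
`L` zero-mean classes:
`P̄_err(σ²) = Σ_i Σ_{j ≠ i} P_i sqrt(P_i P_j) exp (-K_ij(σ²))`. -/
noncomputable def PerrMulti {M N L : ℕ} (Φ : Matrix (Fin M) (Fin N) ℝ)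
    (S : Fin L → Matrix (Fin N) (Fin N) ℝ) (P : Fin L → ℝ) (s : ℝ) : ℝ :=
  ∑ i, ∑ j ∈ Finset.univ.erase i,
    P i * Real.sqrt (P i * P j) * Real.exp (-(Kb Φ (S i) (S j) 0 0 s))

/-!
For positive semidefinite `A` of rank `r` on `ℝᵐ`, `det (A + s I) = s ^ (m - r) q(s)` with `q`
continuous and `q 0 > 0` (the pseudo-determinant of `A`). For a pair of zero-mean classes with
`A = Φ Σ_i Φᵀ`, `B = Φ Σ_j Φᵀ` this gives
`exp (-K_ij(s)) = (det (A + s I) det (B + s I) / det ((A + B + s I) / 2) ^ 2) ^ (1/4)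
  = (s ^ (2 r_ij - r_i - r_j) G(s)) ^ (1/4)`
with `G` continuous and positive at `0`; the exponent is a natural number because
`rank A ≤ rank (A + B)` for positive semidefinite `A`, `B`. Hence every term of the union bound
has a nonnegative limit as `s → 0⁺`, and the limit is positive exactly when `r_i + r_j = 2 r_ij`.
-/

open Finset
open scoped ComplexOrder

lemma exp_neg_half_log_div_sqrt {p c : ℝ} (hp : 0 < p) (hc : 0 < c) :
    exp (-(1 / 2 * log (c / √p))) = √(√(p / c ^ 2)) := by
  rw [← exp_log (by positivity : 0 < √(√(p / c ^ 2))), log_sqrt (by positivity),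
    log_sqrt (by positivity), log_div hp.ne' (by positivity), log_div hc.ne' (by positivity),
    log_sqrt hp.le, log_pow]
  congr 1
  push_cast
  ring

namespace Matrix

variable {n : Type*} [Fintype n]

lemma PosSemidef.rank_le_rank_add {𝕜 : Type*} [RCLike 𝕜] {A B : Matrix n n 𝕜}
    (hA : A.PosSemidef) (hB : B.PosSemidef) : A.rank ≤ (A + B).rank := by
  have hker : LinearMap.ker (A + B).mulVecLin ≤ LinearMap.ker A.mulVecLin := by
    intro x hx
    simp only [LinearMap.mem_ker, mulVecLin_apply] at hx ⊢
    have hsum : star x ⬝ᵥ A *ᵥ x + star x ⬝ᵥ B *ᵥ x = 0 := by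
      rw [← dotProduct_add, ← add_mulVec, hx, dotProduct_zero]
    have hA0 : star x ⬝ᵥ A *ᵥ x = 0 :=
      ((add_eq_zero_iff_of_nonneg (hA.dotProduct_mulVec_nonneg x)
        (hB.dotProduct_mulVec_nonneg x)).1 hsum).1
    exact (hA.dotProduct_mulVec_zero_iff x).1 hA0
  have hAB := LinearMap.finrank_range_add_finrank_ker (A + B).mulVecLin
  have hA := LinearMap.finrank_range_add_finrank_ker A.mulVecLin
  have hkerAB := Submodule.finrank_mono hker
  unfold Matrix.rank
  omega

variable [DecidableEq n]

lemma IsHermitian.det_add_smul_one {A : Matrix n n ℝ} (hA : A.IsHermitian) (s : ℝ) :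
    (A + s • 1).det = ∏ i, (hA.eigenvalues i + s) := by
  have hcharpoly := congrArg (Polynomial.eval (-s)) hA.charpoly_eq
  simp only [eval_charpoly, Polynomial.eval_prod, Polynomial.eval_sub, Polynomial.eval_X,
    Polynomial.eval_C, RCLike.ofReal_real_eq_id, id] at hcharpoly
  have hneg : A + s • 1 = -(scalar n (-s) - A) := by
    rw [neg_sub, scalar_apply, smul_one_eq_diagonal, sub_eq_add_neg, ← diagonal_neg, neg_neg]
  rw [hneg, det_neg, hcharpoly, ← Finset.card_univ, ← prod_neg]
  exact prod_congr rfl fun i _ => by ring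

lemma PosSemidef.det_add_smul_one_pos {A : Matrix n n ℝ} (hA : A.PosSemidef) {s : ℝ}
    (hs : 0 < s) : 0 < (A + s • 1).det := by
  rw [hA.1.det_add_smul_one]
  exact prod_pos fun i _ => by linarith [hA.eigenvalues_nonneg i]

lemma PosSemidef.exists_det_add_smul_one_eq {A : Matrix n n ℝ} (hA : A.PosSemidef) :
    ∃ q : ℝ → ℝ, Continuous q ∧ (∀ s, 0 ≤ s → 0 < q s) ∧
      ∀ s, (A + s • 1).det = s ^ (Fintype.card n - A.rank) * q s := by
  refine ⟨fun s => ∏ i ∈ univ.filter (hA.1.eigenvalues · ≠ 0), (hA.1.eigenvalues i + s),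
    by fun_prop, fun s hs => prod_pos fun i hi => ?_, fun s => ?_⟩
  · have := (hA.eigenvalues_nonneg i).lt_of_ne' (mem_filter.1 hi).2
    linarith
  · have hcard : #(univ.filter (¬ hA.1.eigenvalues · ≠ 0)) = Fintype.card n - A.rank := by
      rw [hA.1.rank_eq_card_non_zero_eigs, Fintype.card_subtype, ← card_univ,
        ← card_filter_add_card_filter_not (s := univ) (p := (hA.1.eigenvalues · ≠ 0))]
      omega
    rw [hA.1.det_add_smul_one, ← prod_filter_mul_prod_filter_not univ (hA.1.eigenvalues · ≠ 0),
      mul_comm, ← hcard, ← prod_const]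
    congr 1
    exact prod_congr rfl fun i hi => by rw [not_not.1 (mem_filter.1 hi).2, zero_add]

lemma PosSemidef.exists_det_ratio_eq {A B : Matrix n n ℝ} (hA : A.PosSemidef)
    (hB : B.PosSemidef) :
    ∃ G : ℝ → ℝ, ContinuousAt G 0 ∧ 0 < G 0 ∧ ∀ s, 0 < s →
      (A + s • 1).det * (B + s • 1).det / ((1 / 2 : ℝ) • (A + B + s • 1)).det ^ 2 =
        s ^ (2 * (A + B).rank - (A.rank + B.rank)) * G s := by
  obtain ⟨qA, hqA, hqA_pos, hdetA⟩ := hA.exists_det_add_smul_one_eq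
  obtain ⟨qB, hqB, hqB_pos, hdetB⟩ := hB.exists_det_add_smul_one_eq
  obtain ⟨qAB, hqAB, hqAB_pos, hdetAB⟩ := (hA.add hB).exists_det_add_smul_one_eq
  have hqA0 := hqA_pos 0 le_rfl
  have hqB0 := hqB_pos 0 le_rfl
  have hqAB0 := hqAB_pos 0 le_rfl
  refine ⟨fun s => 4 ^ Fintype.card n * qA s * qB s / qAB s ^ 2,
    by fun_prop (disch := positivity), by positivity, fun s hs => ?_⟩
  have hrA := hA.rank_le_rank_add hB
  have hrB := hB.rank_le_rank_add hA
  have hrAB := (A + B).rank_le_card_height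
  rw [add_comm B] at hrB
  have hexp : (Fintype.card n - A.rank) + (Fintype.card n - B.rank) =
      (2 * (A + B).rank - (A.rank + B.rank)) + 2 * (Fintype.card n - (A + B).rank) := by
    omega
  have hqABs := (hqAB_pos s hs.le).ne'
  have hscale : ((1 / 2 : ℝ) ^ Fintype.card n) ^ 2 * 4 ^ Fintype.card n = 1 := by
    rw [← pow_mul, pow_mul', ← mul_pow]; norm_num
  rw [det_smul, hdetA, hdetB, hdetAB, mul_mul_mul_comm, ← pow_add, hexp, pow_add, pow_mul]
  field_simp
  linear_combination (-(qA s * qB s * (s ^ (Fintype.card n - (A + B).rank)) ^ 2)) * hscale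

lemma PosSemidef.exists_tendsto_exp_neg_bhattacharyya {A B : Matrix n n ℝ} (hA : A.PosSemidef)
    (hB : B.PosSemidef) :
    ∃ ℓ, 0 ≤ ℓ ∧ (A.rank + B.rank = 2 * (A + B).rank → 0 < ℓ) ∧
      Tendsto (fun s : ℝ => exp (-(1 / 2 * log (((1 / 2 : ℝ) • (A + B + s • 1)).det /
        √((A + s • 1).det * (B + s • 1).det))))) (𝓝[>] 0) (𝓝 ℓ) := by
  obtain ⟨G, hG, hG0, hratio⟩ := hA.exists_det_ratio_eq hB
  refine ⟨√(√(0 ^ (2 * (A + B).rank - (A.rank + B.rank)) * G 0)), by positivity,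
    fun hrank => ?_, ?_⟩
  · rw [show 2 * (A + B).rank - (A.rank + B.rank) = 0 by omega, pow_zero, one_mul]
    positivity
  · have hcont : ContinuousAt
        (fun s => √(√(s ^ (2 * (A + B).rank - (A.rank + B.rank)) * G s))) 0 := by
      fun_prop
    refine (hcont.tendsto.mono_left nhdsWithin_le_nhds).congr' ?_
    filter_upwards [self_mem_nhdsWithin] with s (hs : 0 < s)
    have hdetAB := (hA.add hB).det_add_smul_one_pos hs
    rw [exp_neg_half_log_div_sqrt
      (mul_pos (hA.det_add_smul_one_pos hs) (hB.det_add_smul_one_pos hs))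
      (by rw [det_smul]; positivity), hratio s hs]

end Matrix

lemma Kb_zero_means {M N : ℕ} (Φ : Matrix (Fin M) (Fin N) ℝ) (S1 S2 : Matrix (Fin N) (Fin N) ℝ)
    (s : ℝ) :
    Kb Φ S1 S2 0 0 s = 1 / 2 * log (((1 / 2 : ℝ) • (Φ * S1 * Φᵀ + Φ * S2 * Φᵀ + s • 1)).det /
      √((Φ * S1 * Φᵀ + s • 1).det * (Φ * S2 * Φᵀ + s • 1).det)) := by
  simp [Kb, Matrix.mul_add, Matrix.add_mul]

lemma exists_tendsto_exp_neg_Kb {M N : ℕ} (Φ : Matrix (Fin M) (Fin N) ℝ)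
    {S1 S2 : Matrix (Fin N) (Fin N) ℝ} (h1 : S1.PosSemidef) (h2 : S2.PosSemidef) :
    ∃ ℓ, 0 ≤ ℓ ∧
      ((Φ * S1 * Φᵀ).rank + (Φ * S2 * Φᵀ).rank = 2 * (Φ * (S1 + S2) * Φᵀ).rank → 0 < ℓ) ∧
      Tendsto (fun s => exp (-Kb Φ S1 S2 0 0 s)) (𝓝[>] 0) (𝓝 ℓ) := by
  have hA : (Φ * S1 * Φᵀ).PosSemidef := by simpa using h1.mul_mul_conjTranspose_same Φ
  have hB : (Φ * S2 * Φᵀ).PosSemidef := by simpa using h2.mul_mul_conjTranspose_same Φ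
  simp_rw [Kb_zero_means, Matrix.mul_add, Matrix.add_mul]
  exact hA.exists_tendsto_exp_neg_bhattacharyya hB

theorem multiclass_error_floor_general (M N L : ℕ)
    (Φ : Matrix (Fin M) (Fin N) ℝ) (S : Fin L → Matrix (Fin N) (Fin N) ℝ)
    (hS : ∀ i, (S i).PosSemidef)
    (P : Fin L → ℝ) (hP : ∀ i, 0 < P i)
    (hpair : ∃ i j : Fin L, i ≠ j ∧
      (Φ * S i * Φᵀ).rank + (Φ * S j * Φᵀ).rank = 2 * (Φ * (S i + S j) * Φᵀ).rank) :
    ∃ c : ℝ, 0 < c ∧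
      Filter.Tendsto (fun s : ℝ => PerrMulti Φ S P s) (𝓝[>] 0) (𝓝 c) := by
  choose ℓ hℓ_nonneg hℓ_pos hℓ using fun i j => exists_tendsto_exp_neg_Kb Φ (hS i) (hS j)
  have hterm : ∀ i j, 0 ≤ P i * √(P i * P j) * ℓ i j := fun i j => by
    have := hℓ_nonneg i j
    have := hP i
    positivity
  obtain ⟨i₀, j₀, hij, hrank⟩ := hpair
  refine ⟨∑ i, ∑ j ∈ univ.erase i, P i * √(P i * P j) * ℓ i j, ?_, ?_⟩
  · refine sum_pos' (fun i _ => sum_nonneg fun j _ => hterm i j) ⟨i₀, mem_univ _, ?_⟩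
    refine sum_pos' (fun j _ => hterm i₀ j) ⟨j₀, mem_erase.2 ⟨hij.symm, mem_univ _⟩, ?_⟩
    have := hℓ_pos i₀ j₀ hrank
    have := hP i₀
    have := hP j₀
    positivity
  · unfold PerrMulti
    exact tendsto_finsetSum _ fun i _ => tendsto_finsetSum _ fun j _ => (hℓ i j).const_mul _

/-- Multiclass error floor: with `L ≥ 3` zero-mean classes, if there is at
least one pair `i ≠ j` with `r_i + r_j = 2 r_ij`, then the union–Bhattacharyya
bound converges as `σ² → 0⁺` to a finite strictly positive limit; in
particular the multiclass bound exhibits an error floor. -/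
theorem multiclass_error_floor (M N L : ℕ) (hM : 0 < M) (hN : 0 < N) (hL : 3 ≤ L)
    (Φ : Matrix (Fin M) (Fin N) ℝ) (S : Fin L → Matrix (Fin N) (Fin N) ℝ)
    (hS : ∀ i, (S i).PosSemidef)
    (P : Fin L → ℝ) (hP : ∀ i, 0 < P i) (hPsum : ∑ i, P i = 1)
    (hpair : ∃ i j : Fin L, i ≠ j ∧
      (Φ * S i * Φᵀ).rank + (Φ * S j * Φᵀ).rank = 2 * (Φ * (S i + S j) * Φᵀ).rank) :
    ∃ c : ℝ, 0 < c ∧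
      Filter.Tendsto (fun s : ℝ => PerrMulti Φ S P s) (𝓝[>] 0) (𝓝 c) :=
  multiclass_error_floor_general M N L Φ S hS P hP hpair
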